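/- arXiv:1012.3878 — 8 statements merged into one kernel-verified Lean document; each statement's English description precedes it below -/
import Mathlib

section
/- Given an n-party non-signalling system P(x|u) and a subnormalized distribution p·P^{z0}(x|u) where p ∈ [0,1] and P^{z0} is an n-party non-signalling system, there exists another n-party non-signalling system P^{z1} with p·P^{z0} + (1−p)·P^{z1} = P if and only if p·P^{z0}(x,u) ≤ P(x,u) for all x and u. -/
open scoped Classical

/-- An n-party system is non-signalling: for every subset `I` of parties, the marginal
over the outputs in `I` is independent of the inputs in `I`. -/
def IsNS {n : ℕ} {X U : Fin n → Type*} [∀ i, Fintype (X i)]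
    (P : (∀ i, X i) → (∀ i, U i) → ℝ) : Prop :=
  ∀ (I : Finset (Fin n)) (u u' : ∀ i, U i), (∀ i, i ∉ I → u i = u' i) →
    ∀ x : ∀ i, X i,
      (∑ x' : ∀ i, X i, if (∀ i, i ∉ I → x' i = x i) then P x' u else 0)
      = ∑ x' : ∀ i, X i, if (∀ i, i ∉ I → x' i = x i) then P x' u' else 0

/-- An n-party system is a conditional probability distribution. -/
def IsDist {n : ℕ} {X U : Fin n → Type*} [∀ i, Fintype (X i)]
    (P : (∀ i, X i) → (∀ i, U i) → ℝ) : Prop :=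
  (∀ x u, 0 ≤ P x u) ∧ ∀ u, ∑ x, P x u = 1

/-! If `p < 1`, the only candidate is the residual system `(P - p • P0) / (1 - p)`: it is
non-signalling because the non-signalling systems form a linear subspace, it is normalised
because `P` and `P0` are, and it is non-negative exactly when `p • P0 ≤ P`. If `p = 1`, the
hypothesis `P0 ≤ P` between two normalised distributions forces `P0 = P`. -/

section

variable {n : ℕ} {X U : Fin n → Type*}

noncomputable def residualSystem (P P0 : (∀ i, X i) → (∀ i, U i) → ℝ) (p : ℝ) :
    (∀ i, X i) → (∀ i, U i) → ℝ :=
  fun x u => (P x u - p * P0 x u) / (1 - p)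

theorem mix_residualSystem (P P0 : (∀ i, X i) → (∀ i, U i) → ℝ) {p : ℝ} (hp : p ≠ 1)
    (x : ∀ i, X i) (u : ∀ i, U i) :
    p * P0 x u + (1 - p) * residualSystem P P0 p x u = P x u := by
  have : 1 - p ≠ 0 := sub_ne_zero.mpr hp.symm
  simp only [residualSystem]
  field_simp
  ring

variable [∀ i, Fintype (X i)] {P P0 Q : (∀ i, X i) → (∀ i, U i) → ℝ}

theorem IsNS.linear_combination (hP : IsNS P) (hQ : IsNS Q) (a b : ℝ) :
    IsNS (fun x u => a * P x u + b * Q x u) := by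
  intro I u u' hu x
  have hPx := hP I u u' hu x
  have hQx := hQ I u u' hu x
  simp only [← Finset.sum_filter, Finset.sum_add_distrib, ← Finset.mul_sum] at hPx hQx ⊢
  rw [hPx, hQx]

theorem IsNS.residualSystem (hP : IsNS P) (hP0 : IsNS P0) (p : ℝ) :
    IsNS (residualSystem P P0 p) := by
  convert hP.linear_combination hP0 (1 - p)⁻¹ (-(p / (1 - p))) using 3 with x u
  simp only [_root_.residualSystem]
  ring

theorem IsDist.residualSystem (hP : IsDist P) (hP0 : IsDist P0) {p : ℝ} (hp : p < 1)
    (hle : ∀ x u, p * P0 x u ≤ P x u) : IsDist (residualSystem P P0 p) := by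
  have hpos : 0 < 1 - p := sub_pos.mpr hp
  refine ⟨fun x u => div_nonneg (sub_nonneg.mpr (hle x u)) hpos.le, fun u => ?_⟩
  simp only [_root_.residualSystem]
  rw [← Finset.sum_div, Finset.sum_sub_distrib, ← Finset.mul_sum, hP.2 u, hP0.2 u, mul_one,
    div_self hpos.ne']

theorem IsDist.eq_of_le (hQ : IsDist Q) (hP : IsDist P) (hle : ∀ x u, Q x u ≤ P x u) :
    Q = P := by
  funext x u
  have hsum : ∑ x, Q x u = ∑ x, P x u := by rw [hQ.2 u, hP.2 u]
  exact (Finset.sum_eq_sum_iff_of_le fun x _ => hle x u).mp hsum x (Finset.mem_univ x)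

end

theorem stmt_2_general {n : ℕ} {X U : Fin n → Type*} [∀ i, Fintype (X i)]
    (P P0 : (∀ i, X i) → (∀ i, U i) → ℝ)
    (hP : IsDist P) (hPns : IsNS P) (hP0 : IsDist P0) (hP0ns : IsNS P0)
    (p : ℝ) (hp1 : p ≤ 1) :
    (∃ P1 : (∀ i, X i) → (∀ i, U i) → ℝ, IsDist P1 ∧ IsNS P1 ∧
      ∀ x u, p * P0 x u + (1 - p) * P1 x u = P x u)
    ↔ ∀ x u, p * P0 x u ≤ P x u := by
  constructor
  · rintro ⟨P1, hP1, -, hmix⟩ x u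
    nlinarith [hP1.1 x u, hmix x u]
  · intro hle
    rcases hp1.lt_or_eq with hp | rfl
    · exact ⟨residualSystem P P0 p, hP.residualSystem hP0 hp hle, hPns.residualSystem hP0ns p,
        mix_residualSystem P P0 hp.ne⟩
    · refine ⟨P, hP, hPns, fun x u => ?_⟩
      rw [hP0.eq_of_le hP (by simpa using hle)]
      ring

/-- `(p, P0)` extends to a non-signalling partition of `P` (i.e. there is a
non-signalling system `P1` with `p·P0 + (1−p)·P1 = P`) iff `p·P0 ≤ P` pointwise. -/
theorem stmt_2 {n : ℕ} {X U : Fin n → Type*} [∀ i, Fintype (X i)]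
    (P P0 : (∀ i, X i) → (∀ i, U i) → ℝ)
    (hP : IsDist P) (hPns : IsNS P) (hP0 : IsDist P0) (hP0ns : IsNS P0)
    (p : ℝ) (hp0 : 0 ≤ p) (hp1 : p ≤ 1) :
    (∃ P1 : (∀ i, X i) → (∀ i, U i) → ℝ, IsDist P1 ∧ IsNS P1 ∧
      ∀ x u, p * P0 x u + (1 - p) * P1 x u = P x u)
    ↔ ∀ x u, p * P0 x u ≤ P x u :=
  stmt_2_general P P0 hP hPns hP0 hP0ns p hp1
end

section
/- Let P(X,Y|U,V) be a bipartite non-signalling system with binary inputs and outputs satisfying (1/4)·∑_{(x,y,u,v): x⊕y = u·v} P(x,y|u,v) = 1−ε. Then for any tripartite non-signalling extension P(X,Y,Z|U,V,W) and any inputs u,v and any adversarial input w, the average over z of |P(X=0 | u,v,w,z) − 1/2| is at most 2ε. -/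
/-!
Conditioning on Eve's output `z` splits the Alice–Bob box into sub-normalised boxes
`P3 · · z · · w`, each still non-signalling between Alice and Bob. In such a box, follow
Alice's output around the CHSH cycle of input pairs, using non-signalling to change one
input at a time: away from losing weight the outputs must be correlated as the game demands,
and the odd parity of the cycle brings `x = 0` back to `x = 1`. Hence `|P(X=0) − P(X=1)|`,
i.e. twice the bias, is at most the losing weight of the box. Summing over `z`, the losing
weights add up to that of `P`, which is `4ε`.
-/

open Finset

noncomputable def chshLoss (p : Bool → Bool → Bool → Bool → ℝ) : ℝ :=
  ∑ u : Bool, ∑ v : Bool, ∑ x : Bool, ∑ y : Bool, if xor x y = (u && v) then 0 else p x y u v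

lemma chshLoss_sum {ι : Type*} (s : Finset ι) (p : ι → Bool → Bool → Bool → Bool → ℝ) :
    ∑ i ∈ s, chshLoss (p i) = chshLoss fun x y u v => ∑ i ∈ s, p i x y u v := by
  simp [chshLoss, sum_add_distrib]

lemma chshLoss_eq_four_sub_win (p : Bool → Bool → Bool → Bool → ℝ)
    (hnorm : ∀ u v, ∑ x, ∑ y, p x y u v = 1) :
    chshLoss p = 4 - ∑ u : Bool, ∑ v : Bool, ∑ x : Bool, ∑ y : Bool,
      if xor x y = (u && v) then p x y u v else 0 := by
  simp only [Fintype.sum_bool] at hnorm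
  simp [chshLoss]
  linarith [hnorm false false, hnorm false true, hnorm true false, hnorm true true]

lemma abs_sum_false_sub_half_le_chshLoss (p : Bool → Bool → Bool → Bool → ℝ)
    (hpos : ∀ x y u v, 0 ≤ p x y u v)
    (hnsU : ∀ y u u' v, ∑ x, p x y u v = ∑ x, p x y u' v)
    (hnsV : ∀ x u v v', ∑ y, p x y u v = ∑ y, p x y u v')
    (u v : Bool) :
    |∑ y, p false y u v - (∑ x, ∑ y, p x y u v) / 2| ≤ chshLoss p / 2 := by
  have hU : ∀ y v, p true y false v + p false y false v = p true y true v + p false y true v :=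
    fun y v => by simpa only [Fintype.sum_bool] using hnsU y false true v
  have hV : ∀ x u, p x true u false + p x false u false = p x true u true + p x false u true :=
    fun x u => by simpa only [Fintype.sum_bool] using hnsV x u false true
  simp only [chshLoss, Fintype.sum_bool]
  norm_num
  cases u <;> cases v <;>
    (rw [abs_le]; constructor <;>
      linarith [hpos false false false false, hpos false true false false,
        hpos true false false false, hpos true true false false, hpos false false false true,
        hpos false true false true, hpos true false false true, hpos true true false true,
        hpos false false true false, hpos false true true false, hpos true false true false,
        hpos true true true false, hpos false false true true, hpos false true true true,
        hpos true false true true, hpos true true true true, hU false false, hU false true,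
        hU true false, hU true true, hV false false, hV false true, hV true false, hV true true])

lemma mul_abs_div_sub_half_le {a q : ℝ} (hq : 0 ≤ q) : q * |a / q - 1 / 2| ≤ |a - q / 2| := by
  rcases hq.eq_or_lt with rfl | hq
  · simp
  · rw [← abs_of_pos hq, ← abs_mul, abs_of_pos hq, mul_sub, mul_div_cancel₀ _ hq.ne',
      mul_one_div]

theorem stmt_3_general {Z W : Type*} [Fintype Z]
    (ε : ℝ)
    (P : Bool → Bool → Bool → Bool → ℝ)
    (P3 : Bool → Bool → Z → Bool → Bool → W → ℝ)
    (hpos : ∀ x y z u v w, 0 ≤ P3 x y z u v w)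
    (hnorm : ∀ u v w, ∑ x, ∑ y, ∑ z, P3 x y z u v w = 1)
    (hnsU : ∀ y z u u' v w, ∑ x, P3 x y z u v w = ∑ x, P3 x y z u' v w)
    (hnsV : ∀ x z u v v' w, ∑ y, P3 x y z u v w = ∑ y, P3 x y z u v' w)
    (hmarg : ∀ x y u v w, ∑ z, P3 x y z u v w = P x y u v)
    (hchsh : (1/4) * ∑ u : Bool, ∑ v : Bool, ∑ x : Bool, ∑ y : Bool,
        (if xor x y = (u && v) then P x y u v else 0) = 1 - ε) :
    ∀ u v w, ∑ z, (∑ x, ∑ y, P3 x y z u v w) *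
        |(∑ y, P3 false y z u v w) / (∑ x, ∑ y, P3 x y z u v w) - 1/2| ≤ 2 * ε := by
  intro u v w
  have hPnorm : ∀ u v, ∑ x, ∑ y, P x y u v = 1 := fun u v => by
    simpa only [hmarg, ← sum_comm (γ := Z)] using hnorm u v w
  calc ∑ z, (∑ x, ∑ y, P3 x y z u v w) *
        |(∑ y, P3 false y z u v w) / (∑ x, ∑ y, P3 x y z u v w) - 1/2|
      ≤ ∑ z, chshLoss (fun x y u v => P3 x y z u v w) / 2 := by
        refine sum_le_sum fun z _ => (mul_abs_div_sub_half_le ?_).trans ?_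
        · exact sum_nonneg fun x _ => sum_nonneg fun y _ => hpos _ _ _ _ _ _
        · exact abs_sum_false_sub_half_le_chshLoss _ (fun x y u v => hpos x y z u v w)
            (fun y u u' v => hnsU y z u u' v w) (fun x u v v' => hnsV x z u v v' w) u v
    _ = chshLoss P / 2 := by
        rw [← sum_div, chshLoss_sum]
        simp only [hmarg]
    _ = 2 * ε := by
        rw [chshLoss_eq_four_sub_win P hPnorm]
        linarith

/-- If the Alice–Bob marginal of a tripartite non-signalling system has CHSH value
`1 − ε`, then for any inputs `u, v` and any adversarial input `w`, the average over
`z` of `|P(X=0|u,v,w,z) − 1/2|` is at most `2ε`. -/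
theorem stmt_3 {Z W : Type*} [Fintype Z]
    (ε : ℝ)
    (P : Bool → Bool → Bool → Bool → ℝ)
    (P3 : Bool → Bool → Z → Bool → Bool → W → ℝ)
    (hpos : ∀ x y z u v w, 0 ≤ P3 x y z u v w)
    (hnorm : ∀ u v w, ∑ x, ∑ y, ∑ z, P3 x y z u v w = 1)
    (hnsU : ∀ y z u u' v w, ∑ x, P3 x y z u v w = ∑ x, P3 x y z u' v w)
    (hnsV : ∀ x z u v v' w, ∑ y, P3 x y z u v w = ∑ y, P3 x y z u v' w)
    (hnsW : ∀ x y u v w w', ∑ z, P3 x y z u v w = ∑ z, P3 x y z u v w')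
    (hmarg : ∀ x y u v w, ∑ z, P3 x y z u v w = P x y u v)
    (hchsh : (1/4) * ∑ u : Bool, ∑ v : Bool, ∑ x : Bool, ∑ y : Bool,
        (if xor x y = (u && v) then P x y u v else 0) = 1 - ε) :
    ∀ u v w, ∑ z, (∑ x, ∑ y, P3 x y z u v w) *
        |(∑ y, P3 false y z u v w) / (∑ x, ∑ y, P3 x y z u v w) - 1/2| ≤ 2 * ε :=
  stmt_3_general ε P P3 hpos hnorm hnsU hnsV hmarg hchsh
end

section
/- For ε ≤ 1/4, the bound 2ε on the adversary's distance from uniform of Alice's output is tight: there exists a non-signalling partition of the unbiased system with error ε into 8 local deterministic systems of total weight 4ε and one perfect PR-box with weight 1−4ε, such that conditioned on any of the deterministic outcomes the output X is determined by (u,v). -/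
/-!
Each of the eight local deterministic strategies below wins the CHSH game `x ⊕ y = u ∧ v` on
three of the four input pairs, and for every input pair each winning output pair is produced by
exactly three strategies and each losing one by exactly one. Giving every strategy weight `ε / 2`
therefore contributes `3ε/2` to each winning and `ε/2` to each losing entry, which is exactly what
the noisy box has on top of `(1 - 4ε)` times a perfect PR-box.
-/

open Finset

def aliceStrategy : Fin 8 → Bool → Bool :=
  ![fun _ => false, fun _ => false, fun _ => true, fun _ => true, id, id, not, not]

def bobStrategy : Fin 8 → Bool → Bool :=
  ![fun _ => false, id, fun _ => true, not, fun _ => false, not, fun _ => true, id]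

theorem card_strategies_producing (x y u v : Bool) :
    #{k | x = aliceStrategy k u ∧ y = bobStrategy k v} =
      if xor x y = (u && v) then 3 else 1 := by
  revert x y u v
  decide

theorem stmt_4_general (ε : ℝ) (hε0 : 0 ≤ ε) :
    ∃ (q : Fin 8 → ℝ) (f g : Fin 8 → Bool → Bool),
      (∀ k, 0 ≤ q k) ∧ (∑ k, q k = 4 * ε) ∧
      ∀ x y u v : Bool,
        (if xor x y = (u && v) then (1 - ε)/2 else ε/2)
        = (∑ k, q k * (if x = f k u ∧ y = g k v then (1:ℝ) else 0))
          + (1 - 4*ε) * (if xor x y = (u && v) then (1/2 : ℝ) else 0) := by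
  refine ⟨fun _ => ε / 2, aliceStrategy, bobStrategy, fun _ => by positivity, ?_, ?_⟩
  · simp only [sum_const, card_univ, Fintype.card_fin, nsmul_eq_mul]
    ring
  intro x y u v
  rw [← mul_sum, sum_boole, card_strategies_producing]
  split_ifs <;> push_cast <;> ring

/-- For `ε ≤ 1/4`, the unbiased PR-box with error `ε` admits a non-signalling
partition into 8 local deterministic systems (on each of which `X` is determined by
the input via `f k`) of total weight `4ε`, together with a perfect PR-box of weight
`1 − 4ε`. -/
theorem stmt_4 (ε : ℝ) (hε0 : 0 ≤ ε) (hε : ε ≤ 1/4) :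
    ∃ (q : Fin 8 → ℝ) (f g : Fin 8 → Bool → Bool),
      (∀ k, 0 ≤ q k) ∧ (∑ k, q k = 4 * ε) ∧
      ∀ x y u v : Bool,
        (if xor x y = (u && v) then (1 - ε)/2 else ε/2)
        = (∑ k, q k * (if x = f k u ∧ y = g k v then (1:ℝ) else 0))
          + (1 - 4*ε) * (if xor x y = (u && v) then (1/2 : ℝ) else 0) :=
  stmt_4_general ε hε0
end

section
/- Any local probability distribution with binary inputs and outputs on two parties satisfies the CHSH inequality: (1/4)·∑_{(x,y,u,v): x⊕y = u·v} P(x,y|u,v) ≤ 3/4. -/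
/-!
For a deterministic strategy `x = a u`, `y = b v` the four CHSH conditions
`a u ⊕ b v = u ∧ v` cannot all hold: XOR-ing them, each of `a 0, a 1, b 0, b 1` appears twice,
so the left sides XOR to `0` while the right sides XOR to `1`. Hence a deterministic box wins
at most `3` of the `4` input pairs, and a local box, being a convex combination of
deterministic ones, inherits the bound because the CHSH score is linear in the box.
-/

open Finset

noncomputable def chshScore (P : Bool → Bool → Bool → Bool → ℝ) : ℝ :=
  ∑ u : Bool, ∑ v : Bool, ∑ x : Bool, ∑ y : Bool, if xor x y = (u && v) then P x y u v else 0

noncomputable def deterministicBox (a b : Bool → Bool) (x y u v : Bool) : ℝ :=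
  if x = a u ∧ y = b v then 1 else 0

theorem chshScore_deterministicBox_le (a b : Bool → Bool) :
    chshScore (deterministicBox a b) ≤ 3 := by
  simp only [chshScore, deterministicBox, Fintype.sum_bool]
  cases a true <;> cases a false <;> cases b true <;> cases b false <;> norm_num

theorem chshScore_sum_mul {R : Type*} [Fintype R] (ρ : R → ℝ)
    (Q : R → Bool → Bool → Bool → Bool → ℝ) :
    chshScore (fun x y u v => ∑ r, ρ r * Q r x y u v) = ∑ r, ρ r * chshScore (Q r) := by
  have ite_sum (p : Prop) [Decidable p] (s : R → ℝ) :
      (if p then ∑ r, s r else 0) = ∑ r, if p then s r else 0 := by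
    split_ifs <;> simp
  simp only [chshScore, mul_sum, mul_ite, mul_zero, ite_sum]
  simp only [sum_comm (γ := R)]

theorem sum_mul_le_of_le {R : Type*} [Fintype R] {ρ s : R → ℝ} {c : ℝ}
    (hρ : ∀ r, 0 ≤ ρ r) (hρ1 : ∑ r, ρ r = 1) (hs : ∀ r, s r ≤ c) :
    ∑ r, ρ r * s r ≤ c :=
  calc ∑ r, ρ r * s r ≤ ∑ r, ρ r * c :=
      sum_le_sum fun r _ => mul_le_mul_of_nonneg_left (hs r) (hρ r)
    _ = c := by rw [← sum_mul, hρ1, one_mul]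

/-- Any local bipartite distribution with binary inputs and outputs satisfies the
CHSH inequality `(1/4)·∑_{x⊕y=u·v} P(x,y|u,v) ≤ 3/4`. -/
theorem stmt_7 {R : Type*} [Fintype R]
    (ρ : R → ℝ) (f g : R → Bool → Bool)
    (hρ : ∀ r, 0 ≤ ρ r) (hρ1 : ∑ r, ρ r = 1)
    (P : Bool → Bool → Bool → Bool → ℝ)
    (hP : ∀ x y u v, P x y u v = ∑ r, ρ r * (if x = f r u ∧ y = g r v then (1:ℝ) else 0)) :
    (1/4) * ∑ u : Bool, ∑ v : Bool, ∑ x : Bool, ∑ y : Bool,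
      (if xor x y = (u && v) then P x y u v else 0) ≤ 3/4 := by
  have hP_mixture : P = fun x y u v => ∑ r, ρ r * deterministicBox (f r) (g r) x y u v := by
    funext x y u v
    exact hP x y u v
  have hscore : chshScore P ≤ 3 := by
    rw [hP_mixture, chshScore_sum_mul]
    exact sum_mul_le_of_le hρ hρ1 fun r => chshScore_deterministicBox_le (f r) (g r)
  rw [chshScore] at hscore
  linarith
end

section
/- For any distributions P and Q on a finite set and random variables (S, Z, Q-info) where S = (S_1,...,S_s) is a string of bits, the distance from uniform of S given side information is at most the sum over i of the distance from uniform of S_i given the side information together with S_1,...,S_{i−1}. -/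
open Finset

/- Hybrid argument: writing `M i` for the weights of the length-`i` prefixes, the error of the
whole string is `M s - 2⁻ˢ M 0`, which telescopes into the one-bit errors `M (i+1) - ½ M i`,
each rescaled by `2^-(s-i-1)`; the triangle inequality then gives the bound pointwise in `(σ, e)`,
and summing over `(σ, e)` gives the theorem. -/

theorem abs_sub_pow_mul_le_sum (r : ℝ) (f : ℕ → ℝ) (n : ℕ) :
    |f n - r ^ n * f 0| ≤ ∑ i ∈ range n, |r| ^ (n - i - 1) * |f (i + 1) - r * f i| := by
  induction n with
  | zero => simp
  | succ n ih =>
    have split : f (n + 1) - r ^ (n + 1) * f 0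
        = (f (n + 1) - r * f n) + r * (f n - r ^ n * f 0) := by ring
    have shift : ∀ i ∈ range n, |r| ^ (n + 1 - i - 1) = |r| * |r| ^ (n - i - 1) := by
      intro i hi
      rw [← pow_succ']
      congr 1
      have := mem_range.mp hi
      omega
    calc |f (n + 1) - r ^ (n + 1) * f 0|
        ≤ |f (n + 1) - r * f n| + |r| * |f n - r ^ n * f 0| := by
          rw [split, ← abs_mul]; exact abs_add_le _ _
      _ ≤ |f (n + 1) - r * f n|
            + |r| * ∑ i ∈ range n, |r| ^ (n - i - 1) * |f (i + 1) - r * f i| := by gcongr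
      _ = ∑ i ∈ range (n + 1), |r| ^ (n + 1 - i - 1) * |f (i + 1) - r * f i| := by
          rw [sum_range_succ, Nat.add_sub_cancel_left, Nat.sub_self, pow_zero, one_mul,
            add_comm, mul_sum]
          exact congrArg (· + _) (sum_congr rfl fun i hi => by rw [shift i hi, mul_assoc])

theorem sum_abs_sub_pow_mul_le {α : Type*} (t : Finset α) {r : ℝ} (hr : 0 ≤ r)
    (f : ℕ → α → ℝ) (n : ℕ) :
    ∑ x ∈ t, |f n x - r ^ n * f 0 x|
      ≤ ∑ i ∈ range n, r ^ (n - i - 1) * ∑ x ∈ t, |f (i + 1) x - r * f i x| := by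
  simp only [mul_sum]
  rw [sum_comm]
  gcongr with x
  simpa only [abs_of_nonneg hr] using abs_sub_pow_mul_le_sum r (f · x) n

/-- `M i σ e` is the joint weight of (first `i` bits of `S` agree with `σ`, `E = e`); the sum over
all `σ` counts each length-`i` prefix `2^(s-i)` times, whence the normalizing factors. -/
theorem stmt_9 {E : Type*} [Fintype E] {s : ℕ}
    (P : (Fin s → Bool) → E → ℝ) :
    let M : ℕ → (Fin s → Bool) → E → ℝ := fun i σ e =>
      ∑ t : Fin s → Bool, if (∀ j : Fin s, (j : ℕ) < i → t j = σ j) then P t e else 0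
    (1/2) * ∑ σ : Fin s → Bool, ∑ e : E, |M s σ e - (1/2)^s * M 0 σ e|
      ≤ ∑ i ∈ Finset.range s, (1/2)^(s - i - 1) *
          ((1/2) * ∑ σ : Fin s → Bool, ∑ e : E, |M (i+1) σ e - (1/2) * M i σ e|) := by
  intro M
  have h := sum_abs_sub_pow_mul_le univ (r := 1 / 2) (by norm_num)
    (fun i (p : (Fin s → Bool) × E) => M i p.1 p.2) s
  simp only [Fintype.sum_prod_type] at h
  calc _ ≤ 1 / 2 * ∑ i ∈ range s, (1 / 2) ^ (s - i - 1) *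
        ∑ σ : Fin s → Bool, ∑ e : E, |M (i + 1) σ e - 1 / 2 * M i σ e| := by gcongr
    _ = _ := by rw [mul_sum]; congr! 1; ring
end

section
/- Let x be an n-bit string and y an n-bit string with Hamming distance d_H(x,y) ≤ δ'·n, where 0 < δ' < 1/2. If f : {0,1}^n → {0,1}^m is chosen uniformly from a two-universal family, and y' is chosen to minimize d_H(y,y') among all strings r with f(r) = f(x), then Pr[x ≠ y'] ≤ 2^{n·h(δ') − m}, where h is the binary entropy function. -/
open scoped Classical

/-- The binary entropy function. -/
noncomputable def binEnt (p : ℝ) : ℝ := -p * Real.logb 2 p - (1 - p) * Real.logb 2 (1 - p)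

/-!
Weight each `z : {0,1}^n` by `p ^ d(y,z) * (1 - p) ^ (n - d(y,z))`. These weights sum to
`(p + (1 - p)) ^ n = 1`, and for `p ≤ 1/2` every point of the Hamming ball of radius `p n`
around `y` has weight at least `2 ^ (-n h(p))`; hence the ball has at most `2 ^ (n h(p))` points.
The decoder can only fail if some `z ≠ x` in that ball (namely `y'`) collides with `x` under
`f`, and by two-universality and the union bound this has probability at most
`2 ^ (n h(p)) * 2 ^ (-m)`.
-/

open Finset

section HammingBall

variable {ι : Type*} [Fintype ι]

noncomputable def hammingBall (y : ι → Bool) (r : ℝ) : Finset (ι → Bool) :=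
  {z | (hammingDist y z : ℝ) ≤ r}

theorem mem_hammingBall {y z : ι → Bool} {r : ℝ} :
    z ∈ hammingBall y r ↔ (hammingDist y z : ℝ) ≤ r := by
  simp [hammingBall]

theorem prod_ite_eq_pow_hammingDist {M : Type*} [CommMonoid M] (y z : ι → Bool) (p q : M) :
    ∏ j, (if y j = z j then q else p) =
      p ^ hammingDist y z * q ^ (Fintype.card ι - hammingDist y z) := by
  rw [prod_ite, prod_const, prod_const, mul_comm]
  have hsplit := card_filter_add_card_filter_not (s := univ) (fun j => y j = z j)
  have hdist : #{j | ¬y j = z j} = hammingDist y z := rfl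
  rw [card_univ] at hsplit
  congr 2
  omega

theorem sum_pow_hammingDist_mul_pow {R : Type*} [CommSemiring R] (y : ι → Bool) (p q : R) :
    ∑ z : ι → Bool, p ^ hammingDist y z * q ^ (Fintype.card ι - hammingDist y z) =
      (p + q) ^ Fintype.card ι := by
  simp only [← prod_ite_eq_pow_hammingDist]
  rw [← Fintype.prod_sum (fun j b => if y j = b then q else p), ← card_univ, ← prod_const]
  refine prod_congr rfl fun j _ => ?_
  cases y j <;> simp [add_comm]

theorem log_two_mul_binEnt (p : ℝ) :
    Real.log 2 * binEnt p = -(p * Real.log p + (1 - p) * Real.log (1 - p)) := by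
  have : Real.log 2 ≠ 0 := (Real.log_pos one_lt_two).ne'
  simp only [binEnt, Real.logb]
  field_simp
  ring

theorem two_rpow_neg_mul_binEnt_le_pow_mul_pow {p : ℝ} (hp0 : 0 < p) (hp : p ≤ 1 / 2)
    {d n : ℕ} (hd : (d : ℝ) ≤ p * n) :
    (2 : ℝ) ^ (-(n * binEnt p)) ≤ p ^ d * (1 - p) ^ (n - d) := by
  have hq : 0 < 1 - p := by linarith
  have hdn : d ≤ n := by exact_mod_cast hd.trans (by nlinarith : p * n ≤ n)
  have hlog : Real.log p ≤ Real.log (1 - p) := Real.log_le_log hp0 (by linarith)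
  have hpos : 0 < p ^ d * (1 - p) ^ (n - d) := by positivity
  rw [Real.rpow_def_of_pos two_pos, ← Real.exp_log hpos, Real.exp_le_exp,
    mul_neg, mul_left_comm, log_two_mul_binEnt,
    Real.log_mul (by positivity) (by positivity), Real.log_pow, Real.log_pow, Nat.cast_sub hdn]
  nlinarith [mul_nonneg (sub_nonneg.mpr hd) (sub_nonneg.mpr hlog)]

theorem card_hammingBall_le (y : ι → Bool) {p : ℝ} (hp0 : 0 < p) (hp : p ≤ 1 / 2) :
    (#(hammingBall y (p * Fintype.card ι)) : ℝ) ≤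
      (2 : ℝ) ^ (Fintype.card ι * binEnt p) := by
  set n := Fintype.card ι
  set w : (ι → Bool) → ℝ := fun z => p ^ hammingDist y z * (1 - p) ^ (n - hammingDist y z)
  have hq : 0 ≤ 1 - p := by linarith
  have hmass : (#(hammingBall y (p * n)) : ℝ) * 2 ^ (-(n * binEnt p)) ≤ 1 :=
    calc (#(hammingBall y (p * n)) : ℝ) * 2 ^ (-(n * binEnt p))
        = ∑ _z ∈ hammingBall y (p * n), (2 : ℝ) ^ (-(n * binEnt p)) := by
          rw [sum_const, nsmul_eq_mul]
      _ ≤ ∑ z ∈ hammingBall y (p * n), w z :=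
          sum_le_sum fun _ hz =>
            two_rpow_neg_mul_binEnt_le_pow_mul_pow hp0 hp (mem_hammingBall.1 hz)
      _ ≤ ∑ z, w z :=
          sum_le_sum_of_subset_of_nonneg (subset_univ _) fun _ _ _ => by positivity
      _ = 1 := by simp only [w, n, sum_pow_hammingDist_mul_pow, add_sub_cancel, one_pow]
  rwa [Real.rpow_neg zero_le_two, ← div_eq_mul_inv, div_le_one (by positivity)] at hmass

end HammingBall

theorem card_filter_exists_collision_div_le {F α β : Type*} [Fintype F] [DecidableEq β]
    (H : F → α → β) (x : α) (S : Finset α) {ε : ℝ}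
    (hcoll : ∀ z ∈ S, (#{f | H f z = H f x} : ℝ) / Fintype.card F ≤ ε) :
    (#{f | ∃ z ∈ S, H f z = H f x} : ℝ) / Fintype.card F ≤ #S * ε := by
  have hunion : #{f | ∃ z ∈ S, H f z = H f x} ≤ ∑ z ∈ S, #{f | H f z = H f x} := by
    refine (card_le_card fun f hf => ?_).trans card_biUnion_le
    simpa using hf
  calc (#{f | ∃ z ∈ S, H f z = H f x} : ℝ) / Fintype.card F
      ≤ (∑ z ∈ S, (#{f | H f z = H f x} : ℝ)) / Fintype.card F :=
        div_le_div_of_nonneg_right (mod_cast hunion) (Nat.cast_nonneg _)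
    _ = ∑ z ∈ S, (#{f | H f z = H f x} : ℝ) / Fintype.card F := sum_div _ _ _
    _ ≤ ∑ _z ∈ S, ε := sum_le_sum hcoll
    _ = #S * ε := by rw [sum_const, nsmul_eq_mul]

theorem stmt_11_general {n m : ℕ} {F : Type*} [Fintype F]
    (H : F → (Fin n → Bool) → (Fin m → Bool))
    (huniv : ∀ x x' : Fin n → Bool, x ≠ x' →
      ((Finset.univ.filter fun f => H f x = H f x').card : ℝ) / (Fintype.card F) ≤ (1/2)^m)
    (δ' : ℝ) (hδ0 : 0 < δ') (hδ1 : δ' < 1/2)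
    (x y : Fin n → Bool) (hxy : (hammingDist x y : ℝ) ≤ δ' * n)
    (y' : F → (Fin n → Bool))
    (hy'1 : ∀ f, H f (y' f) = H f x)
    (hy'2 : ∀ f r, H f r = H f x → hammingDist y (y' f) ≤ hammingDist y r) :
    ((Finset.univ.filter fun f => y' f ≠ x).card : ℝ) / (Fintype.card F)
      ≤ (2 : ℝ) ^ ((n : ℝ) * binEnt δ' - (m : ℝ)) := by
  have hball := card_hammingBall_le y hδ0 hδ1.le
  rw [Fintype.card_fin] at hball
  have hfail : ({f | y' f ≠ x} : Finset F) ⊆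
      ({f | ∃ z ∈ (hammingBall y (δ' * n)).erase x, H f z = H f x} : Finset F) := by
    intro f hf
    have hclose : (hammingDist y (y' f) : ℝ) ≤ δ' * n :=
      le_trans (mod_cast hy'2 f x rfl) (hammingDist_comm x y ▸ hxy)
    rw [mem_filter] at hf ⊢
    exact ⟨mem_univ _, y' f, mem_erase.2 ⟨hf.2, mem_hammingBall.2 hclose⟩, hy'1 f⟩
  calc (#{f | y' f ≠ x} : ℝ) / Fintype.card F
      ≤ (#{f | ∃ z ∈ (hammingBall y (δ' * n)).erase x, H f z = H f x} : ℝ)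
          / Fintype.card F :=
        div_le_div_of_nonneg_right (mod_cast card_le_card hfail) (Nat.cast_nonneg _)
    _ ≤ #((hammingBall y (δ' * n)).erase x) * (1 / 2) ^ m :=
        card_filter_exists_collision_div_le H x _ fun z hz => huniv z x (ne_of_mem_erase hz)
    _ ≤ 2 ^ (n * binEnt δ') * (1 / 2) ^ m := by
        gcongr
        exact (Nat.cast_le.2 card_erase_le).trans hball
    _ = 2 ^ ((n : ℝ) * binEnt δ' - m) := by
        rw [Real.rpow_sub two_pos, Real.rpow_natCast, one_div, inv_pow, div_eq_mul_inv]

/-- Information reconciliation via two-universal hashing: if `d_H(x,y) ≤ δ'·n` and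
`f` is drawn uniformly from a two-universal family of functions `{0,1}^n → {0,1}^m`,
and `y'` minimizes the Hamming distance to `y` among preimages of `f(x)`, then
`Pr[x ≠ y'] ≤ 2^(n·h(δ') − m)`. -/
theorem stmt_11 {n m : ℕ} {F : Type*} [Fintype F] [Nonempty F]
    (H : F → (Fin n → Bool) → (Fin m → Bool))
    (huniv : ∀ x x' : Fin n → Bool, x ≠ x' →
      ((Finset.univ.filter fun f => H f x = H f x').card : ℝ) / (Fintype.card F) ≤ (1/2)^m)
    (δ' : ℝ) (hδ0 : 0 < δ') (hδ1 : δ' < 1/2)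
    (x y : Fin n → Bool) (hxy : (hammingDist x y : ℝ) ≤ δ' * n)
    (y' : F → (Fin n → Bool))
    (hy'1 : ∀ f, H f (y' f) = H f x)
    (hy'2 : ∀ f r, H f r = H f x → hammingDist y (y' f) ≤ hammingDist y r) :
    ((Finset.univ.filter fun f => y' f ≠ x).card : ℝ) / (Fintype.card F)
      ≤ (2 : ℝ) ^ ((n : ℝ) * binEnt δ' - (m : ℝ)) :=
  stmt_11_general H huniv δ' hδ0 hδ1 x y hxy y' hy'1 hy'2
end

section
/- If λ₁ satisfies A₁ᵀλ₁ − b₁ ⪰ 0 and λ₂ satisfies A₂ᵀλ₂ − b₂ ⪰ 0, where b₁ ⪰ 0 and b₂ ⪰ 0 are positive semi-definite, then λ₁ ⊗ λ₂ satisfies (A₁ ⊗ A₂)ᵀ(λ₁ ⊗ λ₂) − b₁ ⊗ b₂ ⪰ 0 (Mittal–Szegedy product theorem for semi-definite feasibility). -/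
open Matrix
open scoped Kronecker ComplexOrder

namespace Matrix

variable {ι κ l m n p α : Type*}

theorem sum_kronecker [NonUnitalNonAssocSemiring α] (s : Finset ι) (A : ι → Matrix l m α)
    (B : Matrix n p α) : (∑ i ∈ s, A i) ⊗ₖ B = ∑ i ∈ s, A i ⊗ₖ B := by
  ext ⟨i, i'⟩ ⟨j, j'⟩
  simp only [kronecker_apply, sum_apply, Finset.sum_mul]

theorem kronecker_sum [NonUnitalNonAssocSemiring α] (A : Matrix l m α) (s : Finset ι)
    (B : ι → Matrix n p α) : A ⊗ₖ (∑ i ∈ s, B i) = ∑ i ∈ s, A ⊗ₖ B i := by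
  ext ⟨i, i'⟩ ⟨j, j'⟩
  simp only [kronecker_apply, sum_apply, Finset.mul_sum]

theorem sum_smul_kronecker_sum_smul [CommSemiring α] [Fintype ι] [Fintype κ]
    (a : ι → α) (A : ι → Matrix l m α) (b : κ → α) (B : κ → Matrix n p α) :
    (∑ i, a i • A i) ⊗ₖ (∑ j, b j • B j) = ∑ q : ι × κ, (a q.1 * b q.2) • (A q.1 ⊗ₖ B q.2) := by
  simp_rw [sum_kronecker, kronecker_sum, smul_kronecker, kronecker_smul, smul_smul,
    Fintype.sum_prod_type]

theorem kronecker_sub_kronecker [NonUnitalNonAssocRing α] (X B : Matrix l m α)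
    (Y C : Matrix n p α) :
    X ⊗ₖ Y - B ⊗ₖ C = (X - B) ⊗ₖ Y + B ⊗ₖ (Y - C) := by
  ext ⟨i, i'⟩ ⟨j, j'⟩
  simp only [sub_apply, add_apply, kronecker_apply, sub_mul, mul_sub]
  abel

theorem posSemidef_kronecker_sub_kronecker {𝕜 : Type*} [RCLike 𝕜] [Finite m] [Finite n]
    {X B : Matrix m m 𝕜} {Y C : Matrix n n 𝕜} (hB : B.PosSemidef) (hC : C.PosSemidef)
    (hXB : (X - B).PosSemidef) (hYC : (Y - C).PosSemidef) :
    (X ⊗ₖ Y - B ⊗ₖ C).PosSemidef := by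
  have hY : Y.PosSemidef := by simpa using hYC.add hC
  rw [kronecker_sub_kronecker]
  exact (hXB.kronecker hY).add (hB.kronecker hYC)

end Matrix

/-- Mittal–Szegedy product theorem for semi-definite feasibility: if
`A₁ᵀλ₁ − b₁ ⪰ 0`, `A₂ᵀλ₂ − b₂ ⪰ 0` with `b₁ ⪰ 0` and `b₂ ⪰ 0`, then
`(A₁ ⊗ A₂)ᵀ(λ₁ ⊗ λ₂) − b₁ ⊗ b₂ ⪰ 0`. -/
theorem stmt_14 {m₁ m₂ d₁ d₂ : ℕ}
    (A₁ : Fin m₁ → Matrix (Fin d₁) (Fin d₁) ℝ) (b₁ : Matrix (Fin d₁) (Fin d₁) ℝ)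
    (A₂ : Fin m₂ → Matrix (Fin d₂) (Fin d₂) ℝ) (b₂ : Matrix (Fin d₂) (Fin d₂) ℝ)
    (l₁ : Fin m₁ → ℝ) (l₂ : Fin m₂ → ℝ)
    (hb₁ : b₁.PosSemidef) (hb₂ : b₂.PosSemidef)
    (h₁ : ((∑ i, l₁ i • A₁ i) - b₁).PosSemidef)
    (h₂ : ((∑ j, l₂ j • A₂ j) - b₂).PosSemidef) :
    ((∑ p : Fin m₁ × Fin m₂, (l₁ p.1 * l₂ p.2) • (A₁ p.1 ⊗ₖ A₂ p.2)) - b₁ ⊗ₖ b₂).PosSemidef := by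
  rw [← sum_smul_kronecker_sum_smul]
  exact posSemidef_kronecker_sub_kronecker hb₁ hb₂ h₁ h₂
end

section
/- For any tripartite non-signalling system whose Alice–Bob marginal is P^{n,ε} (n independent unbiased PR-boxes with error ε), the specific non-signalling partition w̄ achieves, for any function f : {0,1}^n → {0,1}, a distance from uniform of the key bit f(X) of at least (−1 + √(1 + 64ε²))/(32ε), a constant independent of n. -/
open scoped Classical

/-- Bipartite non-signalling condition. -/
def IsNSb {A B U V : Type*} [Fintype A] [Fintype B]
    (P : A → B → U → V → ℝ) : Prop :=
  (∀ y u u' v, ∑ x, P x y u v = ∑ x, P x y u' v) ∧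
  (∀ x u v v', ∑ y, P x y u v = ∑ y, P x y u v')

/-- Conditional probability distribution. -/
def IsDistb {A B U V : Type*} [Fintype A] [Fintype B]
    (P : A → B → U → V → ℝ) : Prop :=
  (∀ x y u v, 0 ≤ P x y u v) ∧ ∀ u v, ∑ x, ∑ y, P x y u v = 1

/-!
Write `a x = (-1)^{f x}` and `s = y + u * v` (coordinatewise xor and and). Then
`P^{n,ε}(x, y | u, v) = 2⁻ⁿ · w(x + s)` with `w e = ∏ ε^{e_i} (1 - ε)^{1 - e_i}`, so given Bob's
data `a(X)` has conditional mean `F s = ∑ x, w(x + s) a x`, the noisy average of `a`.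
Tilting `P` by `1 ± h` with `h x s = (a x - F s) / (1 + |F s|)` splits it into two
non-signalling boxes in which `a(X)` has mean `𝔼 a ± 𝔼 (1 - |F|)`; hence the distance from
uniform is at least half of `max |𝔼 a| (𝔼 (1 - |F|))`.

Both quantities cannot be small. With `g = sign F`, Fourier analysis on the cube (Yang's
non-interactive correlation distillation bound) gives `𝔼 |F| = 𝔼 g F ≤ 1 - 2ε (1 - 𝔼 g 𝔼 a)`,
and `|𝔼 g - 𝔼 a| ≤ 𝔼 |g - F| = 𝔼 (1 - |F|)`. If `|𝔼 a|` and `𝔼 (1 - |F|)` were both below `2δ`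
with `δ = ε (1 - 16 δ²)`, these two bounds would contradict each other; the positive root of
that quadratic is the constant of the theorem.
-/

open Finset
open scoped BigOperators

section ShiftedBox

variable {A G U V : Type*} [Fintype A] [Fintype G] [AddGroup G]

lemma isDistb_shift {K : A → G → ℝ} (hK0 : ∀ x s, 0 ≤ K x s) (hK1 : ∑ x, ∑ s, K x s = 1)
    (c : U → V → G) : IsDistb fun x y u v => K x (y + c u v) :=
  ⟨fun _ _ _ _ => hK0 _ _,
    fun u v => (sum_congr rfl fun x _ => Equiv.sum_comp (Equiv.addRight (c u v)) (K x)).trans hK1⟩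

lemma isNSb_shift {K : A → G → ℝ} (hK : ∀ s s', ∑ x, K x s = ∑ x, K x s') (c : U → V → G) :
    IsNSb fun x y u v => K x (y + c u v) :=
  ⟨fun _ _ _ _ => hK _ _, fun x u v v' =>
    (Equiv.sum_comp (Equiv.addRight (c u v)) (K x)).trans
      (Equiv.sum_comp (Equiv.addRight (c u v')) (K x)).symm⟩

end ShiftedBox

lemma pi_bool_add_add_cancel_left {ι : Type*} (x s : ι → Bool) : x + (x + s) = s :=
  neg_add_cancel_left x s

section BooleanCube

variable {ι : Type*} [Fintype ι]

def walsh (T : ι → Bool) : AddChar (ι → Bool) ℝ where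
  toFun x := ∏ i, if T i && x i then -1 else 1
  map_zero_eq_one' := by simp [Bool.zero_eq_false]
  map_add_eq_mul' x y := by
    rw [← prod_mul_distrib]
    refine prod_congr rfl fun i _ => ?_
    change (if T i && xor (x i) (y i) then (-1 : ℝ) else 1) = _
    cases T i <;> cases x i <;> cases y i <;> norm_num

lemma walsh_apply (T x : ι → Bool) : walsh T x = ∏ i, if T i && x i then -1 else 1 := by
  simp [walsh]

lemma walsh_comm (T x : ι → Bool) : walsh T x = walsh x T := by
  simp only [walsh_apply, Bool.and_comm]

lemma walsh_zero (x : ι → Bool) : walsh 0 x = 1 := by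
  rw [walsh_comm]; exact AddChar.map_zero_eq_one _

def noiseWeight (ε : ℝ) (e : ι → Bool) : ℝ := ∏ i, if e i then ε else 1 - ε

lemma noiseWeight_nonneg {ε : ℝ} (h0 : 0 ≤ ε) (h1 : ε ≤ 1) (e : ι → Bool) :
    0 ≤ noiseWeight ε e :=
  prod_nonneg fun i _ => by split <;> linarith

lemma prod_prBox_eq (ε : ℝ) (x y u v : ι → Bool) :
    ∏ i, (if xor (x i) (y i) = (u i && v i) then (1 - ε) / 2 else ε / 2)
      = (1 / 2) ^ Fintype.card ι * noiseWeight ε (x + (y + u * v)) := by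
  rw [noiseWeight, ← card_univ, ← prod_const, ← prod_mul_distrib]
  refine prod_congr rfl fun i _ => ?_
  change _ = 1 / 2 * if xor (x i) (xor (y i) (u i && v i)) then ε else 1 - ε
  cases x i <;> cases y i <;> cases u i <;> cases v i <;> norm_num <;> ring

variable [DecidableEq ι]

lemma walsh_eq_zero_iff {T : ι → Bool} : walsh T = 0 ↔ T = 0 := by
  refine ⟨fun h => ?_, fun h => by ext x; simp [h, walsh_zero]⟩
  by_contra hT
  obtain ⟨i, hi⟩ := Function.ne_iff.mp hT
  have hTi : T i = true := by simpa [Bool.zero_eq_false] using hi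
  have := DFunLike.congr_fun h (Pi.single i true)
  rw [walsh_apply, Fintype.prod_eq_single i fun j hj => by simp [hj]] at this
  norm_num [hTi] at this

lemma sum_walsh_mul_walsh (x y : ι → Bool) :
    ∑ T, walsh T x * walsh T y = if x = y then (Fintype.card (ι → Bool) : ℝ) else 0 := by
  simp only [← AddChar.map_add_eq_mul, walsh_comm _ (x + y), AddChar.sum_eq_ite,
    walsh_eq_zero_iff]
  exact if_congr add_eq_zero_iff_eq_neg rfl rfl

noncomputable def walshCoeff (a : (ι → Bool) → ℝ) (T : ι → Bool) : ℝ := 𝔼 x, a x * walsh T x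

lemma walshCoeff_zero (a : (ι → Bool) → ℝ) : walshCoeff a 0 = 𝔼 x, a x := by
  simp [walshCoeff, walsh_zero]

lemma sum_walshCoeff_mul_walshCoeff (a b : (ι → Bool) → ℝ) :
    ∑ T, walshCoeff a T * walshCoeff b T = 𝔼 x, a x * b x := by
  have hT : ∀ T, walshCoeff a T * walshCoeff b T
      = (∑ x, ∑ y, a x * b y * (walsh T x * walsh T y)) / (Fintype.card (ι → Bool) : ℝ) ^ 2 := by
    intro T
    simp only [walshCoeff, Fintype.expect_eq_sum_div_card, div_mul_div_comm, sum_mul_sum, sq]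
    exact congrArg (· / _) (sum_congr rfl fun x _ => sum_congr rfl fun y _ => by ring)
  calc ∑ T, walshCoeff a T * walshCoeff b T
      = (∑ x, ∑ y, a x * b y * ∑ T, walsh T x * walsh T y)
          / (Fintype.card (ι → Bool) : ℝ) ^ 2 := by
        simp only [hT, ← sum_div, mul_sum]
        rw [sum_comm]
        exact congrArg (· / _) (sum_congr rfl fun x _ => sum_comm)
    _ = 𝔼 x, a x * b x := by
        simp only [sum_walsh_mul_walsh, mul_ite, mul_zero, sum_ite_eq, mem_univ, if_true,
          Fintype.expect_eq_sum_div_card, ← sum_mul]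
        field_simp

lemma sum_walshCoeff_sq {a : (ι → Bool) → ℝ} (ha : ∀ x, a x ^ 2 = 1) :
    ∑ T, walshCoeff a T ^ 2 = 1 := by
  simp only [sq, sum_walshCoeff_mul_walshCoeff]
  simp [← sq, ha]

noncomputable def noise (ε : ℝ) (a : (ι → Bool) → ℝ) (s : ι → Bool) : ℝ :=
  ∑ x, noiseWeight ε (x + s) * a x

lemma sum_noiseWeight_mul_walsh (ε : ℝ) (T : ι → Bool) :
    ∑ e, noiseWeight ε e * walsh T e = (1 - 2 * ε) ^ #{i | T i} := by
  have hfactor : ∀ i, ∑ b, (if b then ε else 1 - ε) * (if T i && b then -1 else 1)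
      = if T i then 1 - 2 * ε else 1 := by
    intro i; cases T i <;> simp; ring
  simp only [noiseWeight, walsh_apply, ← prod_mul_distrib]
  rw [← Fintype.prod_sum (fun i b => (if b then ε else 1 - ε) * if T i && b then -1 else 1)]
  simp only [hfactor, prod_ite, prod_const_one, mul_one, prod_const]

lemma sum_noiseWeight (ε : ℝ) : ∑ e : ι → Bool, noiseWeight ε e = 1 := by
  simpa [walsh_zero] using sum_noiseWeight_mul_walsh (ι := ι) ε 0

lemma sum_noiseWeight_add (ε : ℝ) (s : ι → Bool) : ∑ x, noiseWeight ε (x + s) = 1 :=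
  (Equiv.sum_comp (Equiv.addRight s) (noiseWeight ε)).trans (sum_noiseWeight ε)

lemma walshCoeff_noise (ε : ℝ) (a : (ι → Bool) → ℝ) (T : ι → Bool) :
    walshCoeff (noise ε a) T = (1 - 2 * ε) ^ #{i | T i} * walshCoeff a T := by
  have key : ∀ x, ∑ s, noiseWeight ε (x + s) * walsh T s
      = walsh T x * (1 - 2 * ε) ^ #{i | T i} := by
    intro x
    rw [← sum_noiseWeight_mul_walsh, mul_sum]
    refine Fintype.sum_equiv (Equiv.addLeft x) _ _ fun s => ?_
    have hχ : walsh T s = walsh T x * walsh T (x + s) := by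
      rw [← AddChar.map_add_eq_mul, pi_bool_add_add_cancel_left]
    rw [hχ, Equiv.coe_addLeft]
    ring
  simp only [walshCoeff, noise, Fintype.expect_eq_sum_div_card, sum_mul, ← mul_div_assoc, mul_sum]
  rw [sum_comm]
  congr 1
  refine sum_congr rfl fun x _ => ?_
  calc ∑ s, noiseWeight ε (x + s) * a x * walsh T s
      = a x * ∑ s, noiseWeight ε (x + s) * walsh T s := by
        rw [mul_sum]; exact sum_congr rfl fun s _ => by ring
    _ = _ := by rw [key]; ring

lemma expect_noise (ε : ℝ) (a : (ι → Bool) → ℝ) : 𝔼 s, noise ε a s = 𝔼 x, a x := by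
  simpa [walshCoeff_zero] using walshCoeff_noise ε a 0

lemma abs_noise_le_one {ε : ℝ} (h0 : 0 ≤ ε) (h1 : ε ≤ 1) {a : (ι → Bool) → ℝ}
    (ha : ∀ x, |a x| ≤ 1) (s : ι → Bool) : |noise ε a s| ≤ 1 :=
  calc |noise ε a s| ≤ ∑ x, |noiseWeight ε (x + s) * a x| := abs_sum_le_sum_abs _ _
    _ ≤ ∑ x, noiseWeight ε (x + s) := sum_le_sum fun x _ => by
        rw [abs_mul, abs_of_nonneg (noiseWeight_nonneg h0 h1 _)]
        exact mul_le_of_le_one_right (noiseWeight_nonneg h0 h1 _) (ha x)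
    _ = 1 := sum_noiseWeight_add ε s

lemma mul_mul_le_mul_sq_add_sq_div_two {ρ c g a : ℝ} (hρ0 : 0 ≤ ρ) (hρ : ρ ≤ c) :
    g * (ρ * a) ≤ c * ((g ^ 2 + a ^ 2) / 2) := by
  nlinarith [mul_nonneg hρ0 (sq_nonneg (g - a)), mul_nonneg hρ0 (sq_nonneg (g + a)),
    mul_nonneg (sub_nonneg.mpr hρ) (add_nonneg (sq_nonneg g) (sq_nonneg a))]

/-- Non-interactive correlation distillation: every Walsh coefficient at `T ≠ 0` is damped by
`(1 - 2ε)^|T| ≤ 1 - 2ε`, so only the product of the means survives undamped. -/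
theorem expect_mul_noise_le {ε : ℝ} (h0 : 0 ≤ ε) (h1 : ε ≤ 1 / 2) {a g : (ι → Bool) → ℝ}
    (ha : ∀ x, a x ^ 2 = 1) (hg : ∀ x, g x ^ 2 = 1) :
    𝔼 s, g s * noise ε a s ≤ 1 - 2 * ε * (1 - (𝔼 x, g x) * 𝔼 x, a x) := by
  have hterm : ∀ T, walshCoeff g T * ((1 - 2 * ε) ^ #{i | T i} * walshCoeff a T)
      ≤ (1 - 2 * ε) * ((walshCoeff g T ^ 2 + walshCoeff a T ^ 2) / 2)
        + if T = 0 then 2 * ε * (walshCoeff g T * walshCoeff a T) else 0 := by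
    intro T
    split_ifs with hT
    · have hk : #{i | T i} = 0 := by simp [hT, Bool.zero_eq_false]
      have := mul_mul_le_mul_sq_add_sq_div_two (ρ := 1 - 2 * ε) (g := walshCoeff g T)
        (a := walshCoeff a T) (by linarith) le_rfl
      rw [hk, pow_zero, one_mul]
      linarith
    · have hk : #{i | T i} ≠ 0 := by
        obtain ⟨i, hi⟩ := Function.ne_iff.mp hT
        exact card_ne_zero.mpr ⟨i, by simpa [Bool.zero_eq_false] using hi⟩
      rw [add_zero]
      exact mul_mul_le_mul_sq_add_sq_div_two (pow_nonneg (by linarith) _)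
        (pow_le_of_le_one (by linarith) (by linarith) hk)
  calc 𝔼 s, g s * noise ε a s
      = ∑ T, walshCoeff g T * ((1 - 2 * ε) ^ #{i | T i} * walshCoeff a T) := by
        simp only [← sum_walshCoeff_mul_walshCoeff, walshCoeff_noise]
    _ ≤ _ := sum_le_sum fun T _ => hterm T
    _ = _ := by
        rw [sum_add_distrib, ← mul_sum, ← sum_div, sum_add_distrib, sum_walshCoeff_sq ha,
          sum_walshCoeff_sq hg, sum_ite_eq', if_pos (mem_univ _), walshCoeff_zero,
          walshCoeff_zero]
        ring

theorem le_abs_expect_or_le_expect_one_sub_abs_noise {ε δ : ℝ} (hε0 : 0 < ε) (hε : ε ≤ 1 / 2)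
    (hδ : δ ≤ ε * (1 - 16 * δ ^ 2)) {a : (ι → Bool) → ℝ} (ha : ∀ x, a x ^ 2 = 1) :
    2 * δ ≤ |𝔼 x, a x| ∨ 2 * δ ≤ 𝔼 s, (1 - |noise ε a s|) := by
  set F := noise ε a
  set g : (ι → Bool) → ℝ := fun s => if F s < 0 then -1 else 1
  have hF : ∀ s, |F s| ≤ 1 := abs_noise_le_one hε0.le (by linarith)
    fun x => (sq_le_one_iff_abs_le_one (a x)).mp (ha x).le
  have hg_sq : ∀ s, g s ^ 2 = 1 := fun s => by simp only [g]; split <;> norm_num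
  have hgF : ∀ s, g s * F s = |F s| := fun s => by
    simp only [g]; split
    · rw [abs_of_neg ‹_›]; ring
    · rw [abs_of_nonneg (not_lt.mp ‹_›)]; ring
  have hg_sub : ∀ s, |g s - F s| = 1 - |F s| := fun s => by
    have := abs_le.mp (hF s)
    simp only [g]; split_ifs with hneg
    · rw [abs_of_nonpos (by linarith : -1 - F s ≤ 0), abs_of_neg hneg]; ring
    · rw [abs_of_nonneg (by linarith : 0 ≤ 1 - F s), abs_of_nonneg (not_lt.mp hneg)]
  have hcorr : 𝔼 s, |F s| ≤ 1 - 2 * ε * (1 - (𝔼 s, g s) * 𝔼 x, a x) :=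
    (expect_congr rfl fun s _ => (hgF s).symm).trans_le (expect_mul_noise_le hε0.le hε ha hg_sq)
  have hgap : |(𝔼 s, g s) - 𝔼 x, a x| ≤ 𝔼 s, (1 - |F s|) := by
    rw [← expect_noise ε a, ← expect_sub_distrib]
    exact (abs_expect_le _ _).trans_eq (expect_congr rfl fun s _ => hg_sub s)
  rw [expect_sub_distrib, Fintype.expect_const] at hgap ⊢
  by_contra! hsmall
  obtain ⟨hB, hT⟩ := hsmall
  have hδ0 : 0 < δ := by linarith [abs_nonneg (𝔼 x, a x)]
  have hG : |𝔼 s, g s| < 4 * δ := by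
    linarith [abs_sub_abs_le_abs_sub (𝔼 s, g s) (𝔼 x, a x)]
  have hGB : (𝔼 s, g s) * 𝔼 x, a x < 16 * δ ^ 2 := by
    calc (𝔼 s, g s) * 𝔼 x, a x ≤ |𝔼 s, g s| * |𝔼 x, a x| := by
          rw [← abs_mul]; exact le_abs_self _
      _ ≤ 4 * δ * (2 * δ) := mul_le_mul hG.le hB.le (abs_nonneg _) (by linarith)
      _ < 16 * δ ^ 2 := by nlinarith
  nlinarith [mul_lt_mul_of_pos_left hGB hε0]

lemma expect_eq_half_pow_mul_sum (φ : (ι → Bool) → ℝ) :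
    𝔼 s, φ s = (1 / 2) ^ Fintype.card ι * ∑ s, φ s := by
  rw [Fintype.expect_eq_sum_div_card, Fintype.card_fun, Fintype.card_bool]
  simp [div_eq_mul_inv, mul_comm]

noncomputable def tilt (ε : ℝ) (a : (ι → Bool) → ℝ) (x s : ι → Bool) : ℝ :=
  (a x - noise ε a s) / (1 + |noise ε a s|)

/-- `(1/2)^n · noiseWeight ε (x + s)` is `P^{n,ε}` with Bob's data `s = y + u * v`; the factor
`1 + σ tilt` moves the conditional mean of `a(X)` from `noise ε a s` to
`noise ε a s + σ (1 - |noise ε a s|)`. -/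
noncomputable def attackKernel (ε σ : ℝ) (a : (ι → Bool) → ℝ) (x s : ι → Bool) : ℝ :=
  (1 / 2) ^ Fintype.card ι * noiseWeight ε (x + s) * (1 + σ * tilt ε a x s)

lemma abs_tilt_le_one {ε : ℝ} {a : (ι → Bool) → ℝ} (ha : ∀ x, |a x| ≤ 1) (x s : ι → Bool) :
    |tilt ε a x s| ≤ 1 := by
  have hpos : 0 < 1 + |noise ε a s| := by positivity
  rw [tilt, abs_div, abs_of_pos hpos, div_le_one hpos]
  linarith [abs_sub (a x) (noise ε a s), ha x]

lemma sum_noiseWeight_mul_tilt (ε : ℝ) (a : (ι → Bool) → ℝ) (s : ι → Bool) :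
    ∑ x, noiseWeight ε (x + s) * tilt ε a x s = 0 := by
  simp only [tilt, mul_div_assoc', ← sum_div, mul_sub, sum_sub_distrib, ← sum_mul,
    sum_noiseWeight_add, one_mul]
  rw [noise, sub_self, zero_div]

lemma sum_noiseWeight_mul_mul_tilt (ε : ℝ) {a : (ι → Bool) → ℝ} (ha : ∀ x, a x ^ 2 = 1)
    (s : ι → Bool) : ∑ x, noiseWeight ε (x + s) * (a x * tilt ε a x s) = 1 - |noise ε a s| := by
  have hpos : 0 < 1 + |noise ε a s| := by positivity
  have hexpand : ∀ x, noiseWeight ε (x + s) * (a x * tilt ε a x s)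
      = (noiseWeight ε (x + s) - noiseWeight ε (x + s) * a x * noise ε a s)
        / (1 + |noise ε a s|) := fun x => by
    rw [tilt, mul_div_assoc', mul_sub, ← sq, ha]; ring
  rw [sum_congr rfl fun x _ => hexpand x, ← sum_div, sum_sub_distrib, ← sum_mul,
    sum_noiseWeight_add, ← noise, div_eq_iff hpos.ne', ← sq, ← sq_abs]
  ring

lemma attackKernel_nonneg {ε σ : ℝ} (h0 : 0 ≤ ε) (h1 : ε ≤ 1) (hσ : |σ| ≤ 1)
    {a : (ι → Bool) → ℝ} (ha : ∀ x, |a x| ≤ 1) (x s : ι → Bool) :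
    0 ≤ attackKernel ε σ a x s := by
  have : |σ * tilt ε a x s| ≤ 1 := by
    rw [abs_mul]; exact mul_le_one₀ hσ (abs_nonneg _) (abs_tilt_le_one ha x s)
  exact mul_nonneg (mul_nonneg (by positivity) (noiseWeight_nonneg h0 h1 _))
    (by linarith [neg_abs_le (σ * tilt ε a x s)])

lemma sum_attackKernel (ε σ : ℝ) (a : (ι → Bool) → ℝ) (s : ι → Bool) :
    ∑ x, attackKernel ε σ a x s = (1 / 2) ^ Fintype.card ι := by
  simp only [attackKernel, mul_assoc, ← mul_sum, mul_add, mul_one, sum_add_distrib,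
    mul_left_comm _ σ, sum_noiseWeight_mul_tilt, sum_noiseWeight_add]
  ring

lemma sum_sum_attackKernel (ε σ : ℝ) (a : (ι → Bool) → ℝ) :
    ∑ x, ∑ s, attackKernel ε σ a x s = 1 := by
  rw [sum_comm]
  simp [sum_attackKernel]

lemma sum_sum_mul_attackKernel (ε σ : ℝ) {a : (ι → Bool) → ℝ} (ha : ∀ x, a x ^ 2 = 1) :
    ∑ x, ∑ s, a x * attackKernel ε σ a x s
      = 𝔼 x, a x + σ * 𝔼 s, (1 - |noise ε a s|) := by
  have hs : ∀ s, ∑ x, a x * attackKernel ε σ a x s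
      = (1 / 2) ^ Fintype.card ι * (noise ε a s + σ * (1 - |noise ε a s|)) := fun s => by
    have hx : ∀ x, a x * attackKernel ε σ a x s = (1 / 2) ^ Fintype.card ι
        * (noiseWeight ε (x + s) * a x + σ * (noiseWeight ε (x + s) * (a x * tilt ε a x s))) :=
      fun x => by rw [attackKernel]; ring
    rw [sum_congr rfl fun x _ => hx x, ← mul_sum, sum_add_distrib, ← mul_sum,
      sum_noiseWeight_mul_mul_tilt ε ha]
    rfl
  rw [sum_comm]
  simp only [hs, ← mul_sum]
  rw [← expect_eq_half_pow_mul_sum, expect_add_distrib, ← mul_expect, expect_noise]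

lemma half_attackKernel_add_half (ε : ℝ) (a : (ι → Bool) → ℝ) (x s : ι → Bool) :
    1 / 2 * attackKernel ε 1 a x s + 1 / 2 * attackKernel ε (-1) a x s
      = (1 / 2) ^ Fintype.card ι * noiseWeight ε (x + s) := by
  simp only [attackKernel]; ring

end BooleanCube

lemma eq_mul_one_sub_sixteen_mul_sq {ε δ : ℝ} (hε : 0 < ε)
    (hδ : δ = (-1 + √(1 + 64 * ε ^ 2)) / (32 * ε)) : δ = ε * (1 - 16 * δ ^ 2) := by
  have hr : √(1 + 64 * ε ^ 2) ^ 2 = 1 + 64 * ε ^ 2 := Real.sq_sqrt (by positivity)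
  have hlin : 32 * ε * δ = -1 + √(1 + 64 * ε ^ 2) := by rw [hδ]; field_simp
  have : 64 * ε * (δ - ε * (1 - 16 * δ ^ 2)) = 0 := by
    linear_combination (32 * ε * δ + 1 + √(1 + 64 * ε ^ 2)) * hlin + hr
  linarith [(mul_eq_zero.mp this).resolve_left (by positivity)]

lemma two_mul_max_abs_le (b t : ℝ) : 2 * max |b| |t| ≤ |b + t| + |b - t| := by
  rw [mul_max_of_nonneg _ _ zero_le_two]
  refine max_le ?_ ?_
  · calc 2 * |b| = |(b + t) + (b - t)| := by rw [← abs_two, ← abs_mul]; ring_nf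
      _ ≤ _ := abs_add_le _ _
  · calc 2 * |t| = |(b + t) - (b - t)| := by rw [← abs_two, ← abs_mul]; ring_nf
      _ ≤ _ := abs_sub _ _

/-- For the Alice–Bob marginal `P^{n,ε}` (n independent unbiased PR-boxes with error
`0 < ε ≤ 1/4`) there is a non-signalling partition into two halves of weight `1/2`
achieving, for every function `f : {0,1}^n → {0,1}` and all inputs, a distance from
uniform of the key bit `f(X)` of at least `(−1 + √(1 + 64ε²))/(32ε)`, a constant
independent of `n`. -/
theorem stmt_17 (n : ℕ) (ε : ℝ) (hε0 : 0 < ε) (hε : ε ≤ 1/4)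
    (f : (Fin n → Bool) → Bool) :
    ∃ Q0 Q1 : (Fin n → Bool) → (Fin n → Bool) → (Fin n → Bool) → (Fin n → Bool) → ℝ,
      IsDistb Q0 ∧ IsNSb Q0 ∧ IsDistb Q1 ∧ IsNSb Q1 ∧
      (∀ x y u v, (1/2) * Q0 x y u v + (1/2) * Q1 x y u v
        = ∏ i, (if xor (x i) (y i) = (u i && v i) then (1 - ε)/2 else ε/2)) ∧
      ∀ u v, (-1 + Real.sqrt (1 + 64 * ε^2)) / (32 * ε)
        ≤ (1/2) * ((1/2) * |∑ x, ∑ y, (if f x then (-1:ℝ) else 1) * Q0 x y u v|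
                 + (1/2) * |∑ x, ∑ y, (if f x then (-1:ℝ) else 1) * Q1 x y u v|) := by
  set a : (Fin n → Bool) → ℝ := fun x => if f x then -1 else 1
  have ha : ∀ x, a x ^ 2 = 1 := fun x => by simp only [a]; split <;> norm_num
  have ha1 : ∀ x, |a x| ≤ 1 := fun x => by simp only [a]; split <;> norm_num
  have hK0 (σ : ℝ) (hσ : |σ| ≤ 1) := attackKernel_nonneg hε0.le (by linarith) hσ ha1
  have hK (σ : ℝ) (s s' : Fin n → Bool) :
      ∑ x, attackKernel ε σ a x s = ∑ x, attackKernel ε σ a x s' := by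
    rw [sum_attackKernel, sum_attackKernel]
  have hbias (σ : ℝ) (u v : Fin n → Bool) : ∑ x, ∑ y, a x * attackKernel ε σ a x (y + u * v)
      = 𝔼 x, a x + σ * 𝔼 s, (1 - |noise ε a s|) := by
    rw [← sum_sum_mul_attackKernel ε σ ha]
    exact sum_congr rfl fun x _ =>
      Equiv.sum_comp (Equiv.addRight (u * v)) fun s => a x * attackKernel ε σ a x s
  refine ⟨fun x y u v => attackKernel ε 1 a x (y + u * v),
    fun x y u v => attackKernel ε (-1) a x (y + u * v),
    isDistb_shift (hK0 1 (by norm_num)) (sum_sum_attackKernel ε 1 a) _, isNSb_shift (hK 1) _,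
    isDistb_shift (hK0 (-1) (by norm_num)) (sum_sum_attackKernel ε (-1) a) _,
    isNSb_shift (hK (-1)) _, fun x y u v => ?_, fun u v => ?_⟩
  · rw [half_attackKernel_add_half, prod_prBox_eq]
  · rw [hbias, hbias, one_mul, neg_one_mul, ← sub_eq_add_neg]
    have hmax := two_mul_max_abs_le (𝔼 x, a x) (𝔼 s, (1 - |noise ε a s|))
    rcases le_abs_expect_or_le_expect_one_sub_abs_noise hε0 (by linarith)
      (eq_mul_one_sub_sixteen_mul_sq hε0 rfl).le ha with h | h
    · linarith [le_max_left |𝔼 x, a x| |𝔼 s, (1 - |noise ε a s|)|]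
    · linarith [le_max_right |𝔼 x, a x| |𝔼 s, (1 - |noise ε a s|)|,
        le_abs_self (𝔼 s, (1 - |noise ε a s|))]
end
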